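/- For any graph G, c(G) = 1 if and only if d_min(G) = 1. -/

import Mathlib

/-!
Delete an edge `xy` so that `G - xy` has a cover orientation, i.e. an acyclic orientation in which
no arc `a → b` has a bypass (a second directed path from `a` to `b`). If `x` and `y` lie in
different components of `G - xy`, adding the arc `x → y` creates no bypass, so `G` is a cover
graph. Otherwise the orientation can be changed until `y` is reachable from `x`: when every arc
crossing a cut goes the same way, reversing all of them keeps the orientation a cover orientation,
and doing this at the boundary of the set reachable from `x` makes that set grow. Adding `x → y`
then makes `x → y` the only dependent arc. Conversely, deleting the unique dependent arc of an
acyclic orientation leaves a cover orientation.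
-/

variable {V : Type*}

/-- An orientation of a simple graph `G`: each edge gets exactly one direction. -/
structure Orient (G : SimpleGraph V) where
  dir : V → V → Prop
  dir_adj : ∀ u v, dir u v → G.Adj u v
  adj_dir : ∀ u v, G.Adj u v → dir u v ∨ dir v u
  asymm : ∀ u v, dir u v → ¬ dir v u

/-- The relation obtained from `dir` by reversing the single arc `u → v`. -/
def reverseArc (dir : V → V → Prop) (u v : V) : V → V → Prop :=
  fun a b => (dir a b ∧ ¬(a = u ∧ b = v)) ∨ (a = v ∧ b = u)

/-- A relation is acyclic if there is no directed cycle. -/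
def IsAcyclicRel (dir : V → V → Prop) : Prop :=
  ∀ u v, dir u v → ¬ Relation.ReflTransGen dir v u

/-- An arc `u → v` is dependent if its reversal creates a directed cycle. -/
def DependentArc (dir : V → V → Prop) (u v : V) : Prop :=
  dir u v ∧ ¬ IsAcyclicRel (reverseArc dir u v)

/-- A cover graph admits an acyclic orientation with no dependent arcs. -/
def IsCoverGraph (G : SimpleGraph V) : Prop :=
  ∃ D : Orient G, IsAcyclicRel D.dir ∧ ∀ u v, ¬ DependentArc D.dir u v

/-- The number of dependent arcs of an orientation. -/
noncomputable def numDependent {G : SimpleGraph V} (D : Orient G) : ℕ :=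
  Set.ncard {p : V × V | DependentArc D.dir p.1 p.2}

/-- `d_min`: minimum number of dependent arcs over all acyclic orientations. -/
noncomputable def dmin (G : SimpleGraph V) : ℕ :=
  sInf {n | ∃ D : Orient G, IsAcyclicRel D.dir ∧ numDependent D = n}

/-- `d_max`: maximum number of dependent arcs over all acyclic orientations. -/
noncomputable def dmax (G : SimpleGraph V) : ℕ :=
  sSup {n | ∃ D : Orient G, IsAcyclicRel D.dir ∧ numDependent D = n}

/-- `c(G)`: minimum number of edges to delete from `G` to get a cover graph. -/
noncomputable def coverDeletion (G : SimpleGraph V) : ℕ :=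
  sInf {n | ∃ F : Set (Sym2 V), F ⊆ G.edgeSet ∧ IsCoverGraph (G.deleteEdges F) ∧ F.ncard = n}

/-- The generalized Mycielski graph `M_m(G)`; `none` is the apex `u`,
`some (i, a)` is the vertex `⟨i, a⟩`. -/
def genMycielski (G : SimpleGraph V) (m : ℕ) : SimpleGraph (Option (Fin (m + 1) × V)) where
  Adj x y :=
    match x, y with
    | some (i, a), some (j, b) =>
        G.Adj a b ∧ ((i = j ∧ (i : ℕ) = 0) ∨ (i : ℕ) + 1 = (j : ℕ) ∨ (j : ℕ) + 1 = (i : ℕ))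
    | some (i, _), none => (i : ℕ) = m
    | none, some (j, _) => (j : ℕ) = m
    | none, none => False
  symm := by
    refine ⟨?_⟩
    rintro (_ | ⟨i, a⟩) (_ | ⟨j, b⟩) h
    · exact h
    · exact h
    · exact h
    · refine ⟨h.1.symm, ?_⟩
      rcases h.2 with ⟨h1, h2⟩ | h' | h'
      · exact Or.inl ⟨h1.symm, h1 ▸ h2⟩
      · exact Or.inr (Or.inr h')
      · exact Or.inr (Or.inl h')
  loopless := by
    refine ⟨?_⟩
    rintro (_ | ⟨i, a⟩) h <;> simp_all

open Relation

def addArc (R : V → V → Prop) (x y : V) : V → V → Prop :=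
  fun a b => R a b ∨ (a = x ∧ b = y)

def deleteArc (R : V → V → Prop) (x y : V) : V → V → Prop :=
  fun a b => R a b ∧ ¬(a = x ∧ b = y)

def IsCoverRel (R : V → V → Prop) : Prop :=
  IsAcyclicRel R ∧ ∀ u v, ¬ DependentArc R u v

section Arcs

variable {R Q : V → V → Prop} {a b x y p q : V}

lemma reflTransGen_addArc (h : ReflTransGen (addArc R x y) p q) :
    ReflTransGen R p q ∨ ReflTransGen R p x ∧ ReflTransGen R y q := by
  induction h with
  | refl => exact Or.inl .refl
  | tail _ hcq ih =>
    rcases hcq with hcq | ⟨rfl, rfl⟩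
    · exact ih.imp (·.tail hcq) fun h => ⟨h.1, h.2.tail hcq⟩
    · exact Or.inr ⟨ih.elim id (·.1), .refl⟩

lemma reflTransGen_deleteArc (h : ReflTransGen R p q) :
    ReflTransGen (deleteArc R a b) p q ∨
      ReflTransGen (deleteArc R a b) p a ∧ ReflTransGen (deleteArc R a b) b q := by
  refine reflTransGen_addArc (ReflTransGen.mono (fun c d hcd => ?_) _ _ h)
  by_cases hc : c = a ∧ d = b
  · exact Or.inr hc
  · exact Or.inl ⟨hcd, hc⟩

lemma deleteArc_le : ∀ c d, deleteArc R a b c d → R c d := fun _ _ h => h.1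

namespace IsAcyclicRel

lemma mono (hR : IsAcyclicRel R) (hQR : ∀ a b, Q a b → R a b) : IsAcyclicRel Q :=
  fun a b hab hba => hR a b (hQR a b hab) (ReflTransGen.mono hQR _ _ hba)

lemma antisymm (hR : IsAcyclicRel R) (hab : ReflTransGen R a b) (hba : ReflTransGen R b a) :
    a = b := by
  rcases hab.cases_head with rfl | ⟨c, hac, hcb⟩
  · rfl
  · exact absurd (hcb.trans hba) (hR a c hac)

lemma addArc (hR : IsAcyclicRel R) (hyx : ¬ ReflTransGen R y x) :
    IsAcyclicRel (addArc R x y) := by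
  rintro a b (hab | ⟨rfl, rfl⟩) hba
  · rcases reflTransGen_addArc hba with hba | ⟨hbx, hya⟩
    · exact hR a b hab hba
    · exact hyx (hya.trans (hbx.head hab))
  · exact hyx ((reflTransGen_addArc hba).elim id (·.2))

lemma dependentArc_iff (hR : IsAcyclicRel R) :
    DependentArc R a b ↔ R a b ∧ ReflTransGen (deleteArc R a b) a b := by
  refine ⟨fun ⟨hab, hcyc⟩ => ⟨hab, ?_⟩, fun ⟨hab, hbypass⟩ => ⟨hab, fun hrev => ?_⟩⟩
  · by_contra hbypass
    exact hcyc ((hR.mono deleteArc_le).addArc hbypass)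
  · exact hrev b a (Or.inr ⟨rfl, rfl⟩) (ReflTransGen.mono (fun _ _ h => Or.inl h) _ _ hbypass)

end IsAcyclicRel

lemma IsCoverRel.not_reflTransGen_deleteArc (hR : IsCoverRel R) (hab : R a b) :
    ¬ ReflTransGen (deleteArc R a b) a b :=
  fun h => hR.2 a b (hR.1.dependentArc_iff.2 ⟨hab, h⟩)

lemma DependentArc.of_deleteArc (h : DependentArc (deleteArc R x y) a b) : DependentArc R a b :=
  ⟨h.1.1, fun hR => h.2 (hR.mono fun _ _ => Or.imp (fun h => ⟨h.1.1, h.2⟩) id)⟩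

end Arcs

section Cut

variable {R Q : V → V → Prop} {T : Set V} {a b p q : V}

def sameSide (Q : V → V → Prop) (T : Set V) : V → V → Prop :=
  fun a b => Q a b ∧ (a ∈ T ↔ b ∈ T)

def reverseCut (R : V → V → Prop) (T : Set V) : V → V → Prop :=
  fun a b => sameSide R T a b ∨ (R b a ∧ ¬(a ∈ T ↔ b ∈ T))

lemma mem_iff_mem_of_reflTransGen_sameSide (h : ReflTransGen (sameSide Q T) p q) :
    p ∈ T ↔ q ∈ T := by
  induction h with
  | refl => rfl
  | tail _ hcq ih => exact ih.trans hcq.2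

lemma reflTransGen_sameSide_or_cross (hQ : ∀ a b, Q a b → a ∉ T → b ∉ T)
    (h : ReflTransGen Q p q) :
    ReflTransGen (sameSide Q T) p q ∨ ∃ c d, c ∈ T ∧ d ∉ T ∧ Q c d ∧
      ReflTransGen (sameSide Q T) p c ∧ ReflTransGen (sameSide Q T) d q := by
  induction h with
  | refl => exact Or.inl .refl
  | @tail c q _ hcq ih =>
    rcases ih with hpc | ⟨c', d', hc', hd', hcd', hpc', hdc⟩
    · by_cases hside : c ∈ T ↔ q ∈ T
      · exact Or.inl (hpc.tail ⟨hcq, hside⟩)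
      · have hc : c ∈ T := by
          by_contra hc
          exact hside (iff_of_false hc (hQ c q hcq hc))
        exact Or.inr ⟨c, q, hc, fun hq => hside (iff_of_true hc hq), hcq, hpc, .refl⟩
    · have hc : c ∉ T := fun hc => hd' ((mem_iff_mem_of_reflTransGen_sameSide hdc).2 hc)
      exact Or.inr ⟨c', d', hc', hd', hcd', hpc',
        hdc.tail ⟨hcq, iff_of_false hc (hQ c q hcq hc)⟩⟩

lemma sameSide_reverseCut : sameSide (reverseCut R T) T a b ↔ sameSide R T a b :=
  ⟨fun ⟨h, hs⟩ => h.elim id fun h' => absurd hs h'.2, fun h => ⟨Or.inl h, h.2⟩⟩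

variable (hT : ∀ a b, R a b → a ∈ T → b ∈ T)
include hT

lemma reverseCut_not_mem : ∀ a b, reverseCut R T a b → a ∉ T → b ∉ T := by
  rintro a b (⟨_, hab⟩ | ⟨hba, -⟩) ha hb
  · exact ha (hab.2 hb)
  · exact ha (hT b a hba hb)

lemma isAcyclicRel_reverseCut (hR : IsAcyclicRel R) : IsAcyclicRel (reverseCut R T) := by
  intro a b hab hba
  rcases reflTransGen_sameSide_or_cross (reverseCut_not_mem hT) hba with
    hba | ⟨c, d, hc, hd, -, hbc, hda⟩
  · have hab' : sameSide R T a b :=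
      sameSide_reverseCut.1 ⟨hab, (mem_iff_mem_of_reflTransGen_sameSide hba).symm⟩
    exact hR a b hab'.1 (ReflTransGen.mono (fun _ _ h => (sameSide_reverseCut.1 h).1) _ _ hba)
  · exact reverseCut_not_mem hT a b hab
      (fun ha => hd ((mem_iff_mem_of_reflTransGen_sameSide hda).2 ha))
      ((mem_iff_mem_of_reflTransGen_sameSide hbc).2 hc)

/-- A bypass of a reversed arc `a → b` crosses the cut at a reversed arc `c → d`; back in `R`,
the path `d ⇝ b → a ⇝ c` is then a bypass of `d → c`. -/
lemma isCoverRel_reverseCut (hR : IsCoverRel R) : IsCoverRel (reverseCut R T) := by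
  have hP : IsAcyclicRel (reverseCut R T) := isAcyclicRel_reverseCut hT hR.1
  refine ⟨hP, fun a b hdep => ?_⟩
  obtain ⟨hab, hbypass⟩ := hP.dependentArc_iff.1 hdep
  have hsame : ∀ u v, sameSide (deleteArc (reverseCut R T) a b) T u v →
      sameSide R T u v ∧ ¬(u = a ∧ v = b) :=
    fun u v h => ⟨sameSide_reverseCut.1 ⟨h.1.1, h.2⟩, h.1.2⟩
  rcases reflTransGen_sameSide_or_cross (fun u v h => reverseCut_not_mem hT u v h.1) hbypass with
    hbypass | ⟨c, d, hc, hd, ⟨hcd, hne⟩, hac, hdb⟩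
  · have hab' : sameSide R T a b :=
      sameSide_reverseCut.1 ⟨hab, mem_iff_mem_of_reflTransGen_sameSide hbypass⟩
    exact hR.not_reflTransGen_deleteArc hab'.1 <| ReflTransGen.mono
      (fun u v h => ⟨(hsame u v h).1.1, (hsame u v h).2⟩) _ _ hbypass
  · have ha : a ∈ T := (mem_iff_mem_of_reflTransGen_sameSide hac).2 hc
    have hb : b ∉ T := fun hb => hd ((mem_iff_mem_of_reflTransGen_sameSide hdb).2 hb)
    have hba : R b a := hab.elim (fun h => absurd (h.2.1 ha) hb) And.left
    have hdc : R d c := hcd.elim (fun h => absurd (h.2.1 hc) hd) And.left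
    have toR : ∀ u v, sameSide (deleteArc (reverseCut R T) a b) T u v → deleteArc R d c u v :=
      fun u v h => ⟨(hsame u v h).1.1, fun ⟨hu, hv⟩ => hd (hu ▸ hv ▸ (hsame u v h).1.2 |>.2 hc)⟩
    refine hR.not_reflTransGen_deleteArc hdc ?_
    refine (ReflTransGen.mono toR _ _ hdb).trans (.head ⟨hba, ?_⟩ (ReflTransGen.mono toR _ _ hac))
    rintro ⟨rfl, rfl⟩
    exact hne ⟨rfl, rfl⟩

end Cut

namespace Orient

variable {G H : SimpleGraph V} {x y p q : V}

def reverseCut (D : Orient H) (T : Set V) : Orient H where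
  dir := _root_.reverseCut D.dir T
  dir_adj := by
    rintro a b (⟨h, -⟩ | ⟨h, -⟩)
    · exact D.dir_adj a b h
    · exact (D.dir_adj b a h).symm
  adj_dir a b hab := by
    by_cases hs : a ∈ T ↔ b ∈ T
    · exact (D.adj_dir a b hab).imp (fun h => Or.inl ⟨h, hs⟩) fun h => Or.inl ⟨h, hs.symm⟩
    · exact (D.adj_dir a b hab).symm.imp (fun h => Or.inr ⟨h, hs⟩)
        fun h => Or.inr ⟨h, fun h' => hs h'.symm⟩
  asymm := by
    rintro a b (⟨hab, hs⟩ | ⟨hba, hs⟩) (⟨hba', hs'⟩ | ⟨hab', hs'⟩)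
    · exact D.asymm a b hab hba'
    · exact hs' hs.symm
    · exact hs hs'.symm
    · exact D.asymm a b hab' hba

lemma adj_of_dir_deleteEdges (D : Orient (G.deleteEdges {s(x, y)})) {a b : V} (h : D.dir a b) :
    G.Adj a b ∧ s(a, b) ≠ s(x, y) := by
  simpa using D.dir_adj a b h

def addEdge (D : Orient (G.deleteEdges {s(x, y)})) (hxy : G.Adj x y) : Orient G where
  dir := addArc D.dir x y
  dir_adj := by
    rintro a b (h | ⟨rfl, rfl⟩)
    · exact (adj_of_dir_deleteEdges D h).1
    · exact hxy
  adj_dir a b hab := by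
    by_cases hs : s(a, b) = s(x, y)
    · rcases Sym2.eq_iff.1 hs with ⟨rfl, rfl⟩ | ⟨rfl, rfl⟩
      · exact Or.inl (Or.inr ⟨rfl, rfl⟩)
      · exact Or.inr (Or.inr ⟨rfl, rfl⟩)
    · exact (D.adj_dir a b (by simpa [hab] using hs)).imp Or.inl Or.inl
  asymm := by
    rintro a b (hab | ⟨rfl, rfl⟩) (hba | ⟨hb, ha⟩)
    · exact D.asymm a b hab hba
    · exact (adj_of_dir_deleteEdges D hab).2 (hb ▸ ha ▸ Sym2.eq_swap)
    · exact (adj_of_dir_deleteEdges D hba).2 Sym2.eq_swap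
    · exact hxy.ne ha

def deleteEdge (D : Orient G) (hxy : D.dir x y) : Orient (G.deleteEdges {s(x, y)}) where
  dir := deleteArc D.dir x y
  dir_adj a b h := by
    refine SimpleGraph.deleteEdges_adj.2 ⟨D.dir_adj a b h.1, fun hs => ?_⟩
    rcases Sym2.eq_iff.1 hs with hs | ⟨rfl, rfl⟩
    · exact h.2 hs
    · exact D.asymm _ _ hxy h.1
  adj_dir a b hab := by
    obtain ⟨hab, hs⟩ := SimpleGraph.deleteEdges_adj.1 hab
    refine (D.adj_dir a b hab).imp (fun h => ⟨h, ?_⟩) fun h => ⟨h, ?_⟩ <;>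
      rintro ⟨rfl, rfl⟩ <;> simp [Sym2.eq_swap] at hs
  asymm a b hab hba := D.asymm a b hab.1 hba.1

lemma reachable_of_reflTransGen (D : Orient H) (h : ReflTransGen D.dir p q) : H.Reachable p q := by
  induction h with
  | refl => rfl
  | tail _ hcq ih => exact ih.trans (D.dir_adj _ _ hcq).reachable

lemma exists_isCoverRel_reflTransGen [Finite V] (D : Orient H) (hD : IsCoverRel D.dir)
    (hxy : H.Reachable x y) : ∃ D' : Orient H, IsCoverRel D'.dir ∧ ReflTransGen D'.dir x y := by
  induction hn : {v | ¬ ReflTransGen D.dir x v}.ncard using Nat.strong_induction_on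
    generalizing D with
  | _ n ih =>
  by_cases hy : ReflTransGen D.dir x y
  · exact ⟨D, hD, hy⟩
  set W := {v | ReflTransGen D.dir x v}
  have hW : ∀ a b, D.dir a b → a ∈ W → b ∈ W := fun a b hab ha => ReflTransGen.tail ha hab
  obtain ⟨d, -, hw, hz⟩ := hxy.some.exists_boundary_dart W .refl hy
  have hsub : W ⊆ {v | ReflTransGen (D.reverseCut W).dir x v} := by
    intro v hv
    induction hv with
    | refl => exact .refl
    | tail hxc hcv ih => exact ReflTransGen.tail ih (Or.inl ⟨hcv, iff_of_true hxc (hxc.tail hcv)⟩)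
  have hzw : D.dir d.snd d.fst :=
    (D.adj_dir _ _ d.adj).resolve_left fun h => hz (hW _ _ h hw)
  have hz' : ReflTransGen (D.reverseCut W).dir x d.snd :=
    (hsub hw).tail (Or.inr ⟨hzw, fun h => hz (h.1 hw)⟩)
  refine ih _ ?_ (D.reverseCut W) (isCoverRel_reverseCut hW hD) rfl
  rw [← hn]
  refine Set.ncard_lt_ncard ⟨fun v hv hv' => hv (hsub hv'), fun h => ?_⟩
  exact h hz hz'

end Orient

section Insertion

variable {R : V → V → Prop} {a b x y : V}

lemma IsCoverRel.dependentArc_addArc (hR : IsCoverRel R) (hyx : ¬ ReflTransGen R y x)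
    (h : DependentArc (addArc R x y) a b) :
    (a = x ∧ b = y ∧ ReflTransGen R x y) ∨
      (R a b ∧ ReflTransGen (deleteArc R a b) a x ∧ ReflTransGen (deleteArc R a b) y b) := by
  obtain ⟨hab, hbypass⟩ := (hR.1.addArc hyx).dependentArc_iff.1 h
  rcases hab with hab | ⟨rfl, rfl⟩
  · have hbypass' : ReflTransGen (addArc (deleteArc R a b) x y) a b :=
      ReflTransGen.mono (fun c d h => h.1.imp (fun hcd => ⟨hcd, h.2⟩) id) _ _ hbypass
    rcases reflTransGen_addArc hbypass' with hbypass' | hpaths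
    · exact absurd hbypass' (hR.not_reflTransGen_deleteArc hab)
    · exact Or.inr ⟨hab, hpaths⟩
  · exact Or.inl ⟨rfl, rfl, ReflTransGen.mono (fun c d h => h.1.resolve_right h.2) _ _ hbypass⟩

lemma IsCoverRel.dependentArc_addArc_iff (hR : IsCoverRel R) (hxy : ReflTransGen R x y)
    (hne : x ≠ y) (hnxy : ¬ R x y) : DependentArc (addArc R x y) a b ↔ a = x ∧ b = y := by
  have hyx : ¬ ReflTransGen R y x := fun hyx => hne (hR.1.antisymm hxy hyx)
  refine ⟨fun h => ?_, ?_⟩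
  · rcases hR.dependentArc_addArc hyx h with ⟨hax, hby, -⟩ | ⟨hab, hax, hyb⟩
    · exact ⟨hax, hby⟩
    rcases reflTransGen_deleteArc (a := a) (b := b) hxy with hxy' | ⟨hxa, hby⟩
    · exact absurd (hax.trans (hxy'.trans hyb)) (hR.not_reflTransGen_deleteArc hab)
    · exact ⟨hR.1.antisymm (ReflTransGen.mono deleteArc_le _ _ hax)
          (ReflTransGen.mono deleteArc_le _ _ hxa),
        hR.1.antisymm (ReflTransGen.mono deleteArc_le _ _ hby)
          (ReflTransGen.mono deleteArc_le _ _ hyb)⟩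
  · rintro ⟨rfl, rfl⟩
    refine (hR.1.addArc hyx).dependentArc_iff.2 ⟨Or.inr ⟨rfl, rfl⟩, ReflTransGen.mono ?_ _ _ hxy⟩
    exact fun c d hcd => ⟨Or.inl hcd, fun ⟨hc, hd⟩ => hnxy (hc ▸ hd ▸ hcd)⟩

end Insertion

lemma Nat.sInf_eq_one_iff {s : Set ℕ} : sInf s = 1 ↔ 1 ∈ s ∧ 0 ∉ s := by
  constructor
  · intro h
    refine ⟨h ▸ Nat.sInf_mem (Nat.nonempty_of_pos_sInf (by omega)), fun h0 => ?_⟩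
    have := Nat.sInf_le h0
    omega
  · rintro ⟨h1, h0⟩
    have hle := Nat.sInf_le h1
    have hne : sInf s ≠ 0 := fun h => (Nat.sInf_eq_zero.1 h).elim h0 fun hs => by simp [hs] at h1
    omega

section Graph

variable {G : SimpleGraph V}

lemma numDependent_eq_zero_iff [Finite V] (D : Orient G) :
    numDependent D = 0 ↔ ∀ u v, ¬ DependentArc D.dir u v := by
  rw [numDependent, Set.ncard_eq_zero, Set.eq_empty_iff_forall_notMem, Prod.forall]
  rfl

lemma numDependent_eq_one_iff (D : Orient G) :
    numDependent D = 1 ↔ ∃ u v, ∀ a b, DependentArc D.dir a b ↔ a = u ∧ b = v := by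
  simp [numDependent, Set.ext_iff]

lemma exists_numDependent_eq_zero_iff [Finite V] :
    (∃ D : Orient G, IsAcyclicRel D.dir ∧ numDependent D = 0) ↔ IsCoverGraph G := by
  simp only [numDependent_eq_zero_iff]
  rfl

lemma exists_deleteEdges_ncard_eq_zero_iff [Finite V] :
    (∃ F ⊆ G.edgeSet, IsCoverGraph (G.deleteEdges F) ∧ F.ncard = 0) ↔ IsCoverGraph G := by
  refine ⟨?_, fun hG => ⟨∅, Set.empty_subset _, by rwa [G.deleteEdges_empty], Set.ncard_empty _⟩⟩
  rintro ⟨F, -, hF, hF0⟩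
  rwa [(Set.ncard_eq_zero (Set.toFinite F)).1 hF0, G.deleteEdges_empty] at hF

lemma exists_isCoverGraph_deleteEdges_of_numDependent_eq_one {D : Orient G}
    (hD : IsAcyclicRel D.dir) (h : numDependent D = 1) :
    ∃ x y, G.Adj x y ∧ IsCoverGraph (G.deleteEdges {s(x, y)}) := by
  obtain ⟨x, y, hdep⟩ := (numDependent_eq_one_iff D).1 h
  have hxy : D.dir x y := ((hdep x y).2 ⟨rfl, rfl⟩).1
  refine ⟨x, y, D.dir_adj x y hxy, D.deleteEdge hxy, hD.mono deleteArc_le, fun a b hab => ?_⟩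
  obtain ⟨rfl, rfl⟩ := (hdep a b).1 hab.of_deleteArc
  exact hab.1.2 ⟨rfl, rfl⟩

lemma isCoverGraph_or_exists_numDependent_eq_one [Finite V] {x y : V} (hxy : G.Adj x y)
    (h : IsCoverGraph (G.deleteEdges {s(x, y)})) :
    IsCoverGraph G ∨ ∃ D : Orient G, IsAcyclicRel D.dir ∧ numDependent D = 1 := by
  obtain ⟨D, hD⟩ : ∃ D : Orient _, IsCoverRel D.dir := h
  by_cases hr : (G.deleteEdges {s(x, y)}).Reachable x y
  · obtain ⟨D, hD, hpath⟩ := D.exists_isCoverRel_reflTransGen hD hr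
    have hnxy : ¬ D.dir x y := fun h => (D.adj_of_dir_deleteEdges h).2 rfl
    have hyx : ¬ ReflTransGen D.dir y x := fun h => hxy.ne (hD.1.antisymm hpath h)
    refine Or.inr ⟨D.addEdge hxy, hD.1.addArc hyx, (numDependent_eq_one_iff _).2 ⟨x, y, ?_⟩⟩
    exact fun a b => hD.dependentArc_addArc_iff hpath hxy.ne hnxy
  · have reach : ∀ {p q}, ReflTransGen D.dir p q → _ := D.reachable_of_reflTransGen
    have hyx : ¬ ReflTransGen D.dir y x := fun h => hr (reach h).symm
    refine Or.inl ⟨D.addEdge hxy, hD.1.addArc hyx, fun a b hab => ?_⟩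
    rcases hD.dependentArc_addArc hyx hab with ⟨-, -, hpath⟩ | ⟨hab, hax, hyb⟩
    · exact hr (reach hpath)
    · exact hr ((reach (ReflTransGen.mono deleteArc_le _ _ hax)).symm.trans <|
        (D.dir_adj a b hab).reachable.trans (reach (ReflTransGen.mono deleteArc_le _ _ hyb)).symm)

end Graph

theorem coverDeletion_eq_one_iff [Finite V] (G : SimpleGraph V) :
    coverDeletion G = 1 ↔ dmin G = 1 := by
  rw [coverDeletion, dmin, Nat.sInf_eq_one_iff, Nat.sInf_eq_one_iff]
  simp only [Set.mem_ofPred_eq, exists_deleteEdges_ncard_eq_zero_iff,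
    exists_numDependent_eq_zero_iff]
  refine and_congr_left fun hG => ⟨?_, ?_⟩
  · rintro ⟨F, hFG, hF, hF1⟩
    obtain ⟨e, rfl⟩ := Set.ncard_eq_one.1 hF1
    induction e using Sym2.ind with
    | _ x y => exact (isCoverGraph_or_exists_numDependent_eq_one (hFG rfl) hF).resolve_left hG
  · rintro ⟨D, hD, hD1⟩
    obtain ⟨x, y, hxy, hG'⟩ := exists_isCoverGraph_deleteEdges_of_numDependent_eq_one hD hD1
    exact ⟨{s(x, y)}, Set.singleton_subset_iff.2 hxy, hG', Set.ncard_singleton _⟩
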